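/- arXiv:math/0601740 — 2 statements merged into one kernel-verified Lean document; each statement's English description precedes it below -/
import Mathlib

section
/- Let f₁(t,x,v) = {ρ₁ + v·u₁ + (|v|²/2 − 3/2)θ₁}√μ(v) with ρ₁, θ₁ : Ω → ℝ and u₁ : Ω → ℝ³ smooth, Ω ⊂ ℝ³ open, and μ the normalized Maxwellian. If ⟨v·∇_x f₁, √μ⟩ = 0 and ⟨v·∇_x f₁, |v|²√μ/2⟩ = 0 pointwise in x (⟨·,·⟩ the L²_v inner product) then ∇·u₁ = 0, and if additionally ⟨v·∇_x f₁, v√μ⟩ = 0 then ∇(ρ₁ + θ₁) = 0. -/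
open MeasureTheory Real

/-- The normalized global Maxwellian `μ(v) = (2π)^{-3/2} e^{-|v|²/2}` on `ℝ³`. -/
noncomputable def maxwellian (v : Fin 3 → ℝ) : ℝ :=
  (2 * Real.pi) ^ (-(3 : ℝ) / 2) * Real.exp (-(∑ i, (v i) ^ 2) / 2)

open Filter


noncomputable def gpow (n : ℕ) (x : ℝ) : ℝ := x ^ n * Real.exp (-x ^ 2 / 2)

lemma gpow_cont (n : ℕ) : Continuous (gpow n) := by
  unfold gpow; fun_prop

lemma integrable_gpow (n : ℕ) : Integrable (gpow n) := by
  have hC : ∀ x : ℝ, ‖gpow n x‖ ≤ (1 + 4 ^ n * n.factorial) * Real.exp (-(1/4) * x ^ 2) := by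
    intro x
    have hx2 : (0:ℝ) ≤ x ^ 2 / 4 := by positivity
    have hfac : (0:ℝ) < n.factorial := by exact_mod_cast n.factorial_pos
    have key : |x| ^ n ≤ (1 + 4 ^ n * n.factorial) * Real.exp (x ^ 2 / 4) := by
      have h1 : (x ^ 2 / 4) ^ n ≤ Real.exp (x ^ 2 / 4) * n.factorial := by
        rw [← div_le_iff₀ hfac]
        calc (x ^ 2 / 4) ^ n / n.factorial
            ≤ ∑ i ∈ Finset.range (n+1), (x ^ 2 / 4) ^ i / i.factorial :=
              Finset.single_le_sum (f := fun i => (x ^ 2/4) ^ i / i.factorial)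
                (fun i _ => by positivity) (Finset.self_mem_range_succ n)
          _ ≤ Real.exp (x ^ 2 / 4) := Real.sum_le_exp_of_nonneg hx2 _
      have h2 : x ^ (2*n) ≤ 4 ^ n * n.factorial * Real.exp (x ^ 2 / 4) := by
        have e : x ^ (2*n) = (x ^ 2 / 4) ^ n * 4 ^ n := by
          rw [div_pow, pow_mul]; field_simp
        rw [e]
        calc (x^2/4)^n * 4^n ≤ (Real.exp (x^2/4) * n.factorial) * 4 ^ n := by
              gcongr
          _ = 4 ^ n * n.factorial * Real.exp (x^2/4) := by ring
      rcases le_or_gt (|x|) 1 with h | h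
      · calc |x| ^ n ≤ 1 := pow_le_one₀ (abs_nonneg x) h
          _ ≤ (1 + 4 ^ n * n.factorial) * Real.exp (x ^ 2 / 4) := by
              nlinarith [Real.one_le_exp hx2, mul_pos (by positivity : (0:ℝ) < (4:ℝ)^n) hfac]
      · calc |x| ^ n ≤ |x| ^ (2*n) := pow_le_pow_right₀ h.le (by omega)
          _ = x ^ (2*n) := by rw [← abs_pow, abs_of_nonneg ((even_two_mul n).pow_nonneg x)]
          _ ≤ 4 ^ n * n.factorial * Real.exp (x ^ 2 / 4) := h2
          _ ≤ (1 + 4 ^ n * n.factorial) * Real.exp (x ^ 2 / 4) := by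
              have := Real.exp_pos (x^2/4); nlinarith
    have e : ‖gpow n x‖ = |x| ^ n * Real.exp (-x^2/2) := by
      rw [gpow, norm_mul, Real.norm_eq_abs, Real.norm_eq_abs, abs_pow,
        abs_of_nonneg (Real.exp_pos _).le]
    rw [e]
    calc |x| ^ n * Real.exp (-x^2/2)
        ≤ ((1 + 4 ^ n * n.factorial) * Real.exp (x ^ 2 / 4)) * Real.exp (-x^2/2) := by
          gcongr
      _ = (1 + 4 ^ n * n.factorial) * Real.exp (-(1/4) * x ^ 2) := by
          rw [mul_assoc, ← Real.exp_add]; ring_nf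
  exact ((integrable_exp_neg_mul_sq (by norm_num : (0:ℝ) < 1/4)).const_mul _).mono'
    (gpow_cont n).aestronglyMeasurable (Filter.Eventually.of_forall hC)

lemma tendsto_gpow_cocompact (n : ℕ) : Tendsto (gpow n) (cocompact ℝ) (nhds 0) := by
  apply squeeze_zero_norm (a := fun x : ℝ => |x| ^ (n:ℝ) * Real.exp (-(1/2) * x ^ 2)) (t₀ := cocompact ℝ)
  · intro x
    rw [gpow, norm_mul, Real.norm_eq_abs, Real.norm_eq_abs, abs_pow,
      abs_of_nonneg (Real.exp_pos _).le, Real.rpow_natCast]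
    apply le_of_eq; ring_nf
  · exact tendsto_rpow_abs_mul_exp_neg_mul_sq_cocompact (by norm_num) _

lemma tendsto_gpow_atTop (n : ℕ) : Tendsto (gpow n) atTop (nhds 0) :=
  (tendsto_gpow_cocompact n).mono_left (by rw [cocompact_eq_atBot_atTop]; exact le_sup_right)

lemma tendsto_gpow_atBot (n : ℕ) : Tendsto (gpow n) atBot (nhds 0) :=
  (tendsto_gpow_cocompact n).mono_left (by rw [cocompact_eq_atBot_atTop]; exact le_sup_left)

lemma gpow_zero_integral : ∫ x, gpow 0 x = Real.sqrt (2 * Real.pi) := by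
  have : ∀ x : ℝ, gpow 0 x = Real.exp (-(1/2) * x ^ 2) := by
    intro x; rw [gpow]; ring_nf
  rw [funext this, integral_gaussian]
  rw [div_div_eq_mul_div, div_one] ; ring_nf

lemma gpow_one_integral : ∫ x, gpow 1 x = 0 := by
  have h : ∀ x : ℝ, HasDerivAt (fun t : ℝ => -Real.exp (-t^2/2)) (gpow 1 x) x := by
    intro x
    have : HasDerivAt (fun t : ℝ => -t^2/2) (-x) x := by
      have := ((hasDerivAt_pow 2 x).neg).div_const 2
      simpa using this.congr_deriv (by ring)
    have h2 := (this.exp.neg).congr_deriv (g' := gpow 1 x) (by simp only [gpow]; ring)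
    exact h2
  rw [MeasureTheory.integral_of_hasDerivAt_of_tendsto h (integrable_gpow 1)
    ((tendsto_gpow_atBot 0).neg.congr (fun x => by rw [gpow]; ring_nf))
    ((tendsto_gpow_atTop 0).neg.congr (fun x => by rw [gpow]; ring_nf))]
  simp

lemma gpow_rec (n : ℕ) : ∫ x, gpow (n+2) x = (n+1) * ∫ x, gpow n x := by
  have h : ∀ x : ℝ, HasDerivAt (fun t : ℝ => -(t^(n+1) * Real.exp (-t^2/2)))
      (gpow (n+2) x - (n+1) * gpow n x) x := by
    intro x
    have h1 : HasDerivAt (fun t : ℝ => -t^2/2) (-x) x := by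
      have := ((hasDerivAt_pow 2 x).neg).div_const 2
      simpa using this.congr_deriv (by ring)
    have h2 := ((hasDerivAt_pow (n+1) x).mul h1.exp).neg
    apply h2.congr_deriv
    rw [gpow, gpow]
    push_cast
    ring
  have hint : Integrable (fun x => gpow (n+2) x - (n+1) * gpow n x) :=
    (integrable_gpow (n+2)).sub ((integrable_gpow n).const_mul _)
  have := MeasureTheory.integral_of_hasDerivAt_of_tendsto h hint
    ((tendsto_gpow_atBot (n+1)).neg)
    ((tendsto_gpow_atTop (n+1)).neg)
  rw [MeasureTheory.integral_sub (integrable_gpow (n+2)) ((integrable_gpow n).const_mul _),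
    integral_const_mul] at this
  simp only [sub_zero, neg_zero] at this
  simp only [gpow] at this ⊢
  linarith [this]

noncomputable def gm (n : ℕ) : ℝ := (∫ x, gpow n x) / Real.sqrt (2 * Real.pi)

lemma sqrt_two_pi_pos : (0:ℝ) < Real.sqrt (2 * Real.pi) :=
  Real.sqrt_pos.mpr (by positivity)

lemma gm_zero : gm 0 = 1 := by
  rw [gm, gpow_zero_integral, div_self sqrt_two_pi_pos.ne']
lemma gm_one : gm 1 = 0 := by rw [gm, gpow_one_integral, zero_div]
lemma gm_two : gm 2 = 1 := by
  have := gpow_rec 0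
  rw [gm, show (0:ℕ)+2 = 2 from rfl] at *
  rw [this, gpow_zero_integral]
  push_cast
  rw [zero_add, one_mul, div_self sqrt_two_pi_pos.ne']
lemma gm_three : gm 3 = 0 := by
  have := gpow_rec 1
  rw [gm, show (1:ℕ)+2 = 3 from rfl] at *
  rw [this, gpow_one_integral]
  simp
lemma gm_four : gm 4 = 3 := by
  have h2 := gpow_rec 0
  have := gpow_rec 2
  rw [gm, show (2:ℕ)+2 = 4 from rfl] at *
  rw [this, h2, gpow_zero_integral]
  push_cast
  rw [mul_div_assoc, mul_div_assoc, div_self sqrt_two_pi_pos.ne']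
  norm_num

lemma maxwellian_prod (v : Fin 3 → ℝ) :
    maxwellian v = ∏ i, (Real.exp (-(v i)^2/2) / Real.sqrt (2 * Real.pi)) := by
  have h2pi : (0:ℝ) < 2 * Real.pi := by positivity
  have h1 : Real.exp (-(∑ i, (v i)^2)/2) = ∏ i, Real.exp (-(v i)^2/2) := by
    rw [← Real.exp_sum]
    congr 1
    rw [← Finset.sum_div]
    congr 1
    rw [← Finset.sum_neg_distrib]
  have h2 : (2 * Real.pi) ^ (-(3:ℝ)/2) = (Real.sqrt (2 * Real.pi))⁻¹ ^ (3:ℕ) := by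
    rw [Real.sqrt_eq_rpow, ← Real.rpow_neg_one, ← Real.rpow_natCast _ 3,
      ← Real.rpow_mul h2pi.le, ← Real.rpow_mul h2pi.le]
    norm_num
  rw [maxwellian, h1, h2]
  rw [Finset.prod_div_distrib, Finset.prod_const]
  rw [Finset.card_univ, Fintype.card_fin, div_eq_mul_inv, inv_pow, mul_comm]

lemma mon_eq (e : Fin 3 → ℕ) (v : Fin 3 → ℝ) :
    (∏ i, v i ^ e i) * maxwellian v = ∏ i, (gpow (e i) (v i) / Real.sqrt (2 * Real.pi)) := by
  rw [maxwellian_prod, ← Finset.prod_mul_distrib]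
  congr 1; funext i
  rw [gpow, mul_div_assoc]

lemma integrable_mon (e : Fin 3 → ℕ) :
    Integrable (fun v : Fin 3 → ℝ => (∏ i, v i ^ e i) * maxwellian v) := by
  rw [show (fun v : Fin 3 → ℝ => (∏ i, v i ^ e i) * maxwellian v)
      = fun v => ∏ i, (gpow (e i) (v i) / Real.sqrt (2 * Real.pi)) from funext (mon_eq e)]
  exact Integrable.fintype_prod_dep (fun i => (integrable_gpow (e i)).div_const _)

lemma integral_mon (e : Fin 3 → ℕ) :
    ∫ v : Fin 3 → ℝ, (∏ i, v i ^ e i) * maxwellian v = ∏ i, gm (e i) := by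
  rw [show (fun v : Fin 3 → ℝ => (∏ i, v i ^ e i) * maxwellian v)
      = fun v => ∏ i, (gpow (e i) (v i) / Real.sqrt (2 * Real.pi)) from funext (mon_eq e)]
  rw [MeasureTheory.integral_fintype_prod_volume_eq_prod
    (f := fun i x => gpow (e i) x / Real.sqrt (2 * Real.pi))]
  congr 1; funext i
  rw [integral_div, gm]

lemma prod_pow_ind (v : Fin 3 → ℝ) (i : Fin 3) :
    (∏ l, v l ^ (if l = i then 1 else 0)) = v i := by
  have : ∀ l, v l ^ (if l = i then 1 else 0) = (if l = i then v l else 1) := by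
    intro l; split <;> simp
  rw [funext this]
  simp [Finset.prod_ite_eq']

lemma prod_pow_ind2 (v : Fin 3 → ℝ) (i : Fin 3) :
    (∏ l, v l ^ (if l = i then 2 else 0)) = (v i) ^ 2 := by
  have : ∀ l, v l ^ (if l = i then 2 else 0) = (if l = i then (v l) ^ 2 else 1) := by
    intro l; split <;> simp
  rw [funext this]
  simp [Finset.prod_ite_eq']

lemma prod_pow_add (v : Fin 3 → ℝ) (e f : Fin 3 → ℕ) :
    (∏ l, v l ^ (e l + f l)) = (∏ l, v l ^ e l) * (∏ l, v l ^ f l) := by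
  rw [← Finset.prod_mul_distrib]
  exact Finset.prod_congr rfl fun l _ => pow_add _ _ _

lemma intP0 : ∫ v : Fin 3 → ℝ, maxwellian v = 1 := by
  have := integral_mon (fun _ => 0)
  simpa [gm_zero] using this

lemma intbleP1 (i : Fin 3) : Integrable (fun v : Fin 3 → ℝ => v i * maxwellian v) := by
  have := integrable_mon (fun l => if l = i then 1 else 0)
  simpa [prod_pow_ind] using this

lemma intP1 (i : Fin 3) : ∫ v : Fin 3 → ℝ, v i * maxwellian v = 0 := by
  have := integral_mon (fun l => if l = i then 1 else 0)
  simp only [prod_pow_ind] at this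
  rw [this]
  refine Finset.prod_eq_zero (Finset.mem_univ i) ?_
  simp [gm_one]

lemma eq_mon2 (i j : Fin 3) (v : Fin 3 → ℝ) :
    v i * v j = ∏ l, v l ^ ((if l = i then 1 else 0) + (if l = j then 1 else 0)) := by
  rw [prod_pow_add, prod_pow_ind, prod_pow_ind]

lemma intbleP2 (i j : Fin 3) : Integrable (fun v : Fin 3 → ℝ => (v i * v j) * maxwellian v) := by
  have := integrable_mon (fun l => (if l = i then 1 else 0) + (if l = j then 1 else 0))
  simpa [← eq_mon2] using this

lemma intP2 (i j : Fin 3) :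
    ∫ v : Fin 3 → ℝ, (v i * v j) * maxwellian v = if i = j then 1 else 0 := by
  have := integral_mon (fun l => (if l = i then 1 else 0) + (if l = j then 1 else 0))
  simp only [← eq_mon2] at this
  rw [this]
  fin_cases i <;> fin_cases j <;>
    simp [Fin.prod_univ_three, gm_zero, gm_one, gm_two]

lemma eq_mon3 (i j k : Fin 3) (v : Fin 3 → ℝ) :
    v i * v j * v k = ∏ l, v l ^
      (((if l = i then 1 else 0) + (if l = j then 1 else 0)) + (if l = k then 1 else 0)) := by
  rw [prod_pow_add, prod_pow_add, prod_pow_ind, prod_pow_ind, prod_pow_ind]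

lemma intbleP3 (i j k : Fin 3) :
    Integrable (fun v : Fin 3 → ℝ => (v i * v j * v k) * maxwellian v) := by
  have := integrable_mon
    (fun l => ((if l = i then 1 else 0) + (if l = j then 1 else 0)) + (if l = k then 1 else 0))
  simpa [← eq_mon3] using this

lemma intP3 (i j k : Fin 3) :
    ∫ v : Fin 3 → ℝ, (v i * v j * v k) * maxwellian v = 0 := by
  have := integral_mon
    (fun l => ((if l = i then 1 else 0) + (if l = j then 1 else 0)) + (if l = k then 1 else 0))
  simp only [← eq_mon3] at this
  rw [this]
  fin_cases i <;> fin_cases j <;> fin_cases k <;>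
    simp [Fin.prod_univ_three, gm_zero, gm_one, gm_two, gm_three]

lemma eq_mon4 (k i j : Fin 3) (v : Fin 3 → ℝ) :
    (v k) ^ 2 * (v i * v j) = ∏ l, v l ^
      ((if l = k then 2 else 0) + ((if l = i then 1 else 0) + (if l = j then 1 else 0))) := by
  rw [prod_pow_add, prod_pow_add, prod_pow_ind2, prod_pow_ind, prod_pow_ind]

lemma intbleP4 (k i j : Fin 3) :
    Integrable (fun v : Fin 3 → ℝ => ((v k) ^ 2 * (v i * v j)) * maxwellian v) := by
  have := integrable_mon
    (fun l => (if l = k then 2 else 0) + ((if l = i then 1 else 0) + (if l = j then 1 else 0)))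
  simpa [← eq_mon4] using this

lemma intP4 (k i j : Fin 3) :
    ∫ v : Fin 3 → ℝ, ((v k) ^ 2 * (v i * v j)) * maxwellian v =
      if i = j then (if k = i then 3 else 1) else 0 := by
  have := integral_mon
    (fun l => (if l = k then 2 else 0) + ((if l = i then 1 else 0) + (if l = j then 1 else 0)))
  simp only [← eq_mon4] at this
  rw [this]
  fin_cases i <;> fin_cases j <;> fin_cases k <;>
    simp [Fin.prod_univ_three, gm_zero, gm_one, gm_two, gm_three, gm_four]

lemma master1 (A D : Fin 3 → ℝ) (B : Fin 3 → Fin 3 → ℝ) :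
    ∫ v : Fin 3 → ℝ,
      (∑ j, v j * (A j + (∑ i, B i j * v i) + ((∑ i, (v i)^2)/2 - 3/2) * D j)) * maxwellian v
      = ∑ j, B j j := by
  have key : ∀ v : Fin 3 → ℝ,
      (∑ j, v j * (A j + (∑ i, B i j * v i) + ((∑ i, (v i)^2)/2 - 3/2) * D j)) * maxwellian v
      = ∑ j, (A j * (v j * maxwellian v) + (∑ i, B i j * ((v i * v j) * maxwellian v))
          + D j * ((1/2) * (∑ k, (v k * v k * v j) * maxwellian v)
              - (3/2) * (v j * maxwellian v))) := by
    intro v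
    rw [Finset.sum_mul]
    refine Finset.sum_congr rfl fun j _ => ?_
    rw [show (∑ i, B i j * ((v i * v j) * maxwellian v)) = (∑ i, B i j * v i) * (v j * maxwellian v)
        from by rw [Finset.sum_mul]; exact Finset.sum_congr rfl fun i _ => by ring,
      show (∑ k, (v k * v k * v j) * maxwellian v) = (∑ k, (v k)^2) * (v j * maxwellian v)
        from by rw [Finset.sum_mul]; exact Finset.sum_congr rfl fun k _ => by ring]
    ring
  rw [funext key]
  have ible : ∀ j : Fin 3, Integrable (fun v : Fin 3 → ℝ =>
      A j * (v j * maxwellian v) + (∑ i, B i j * ((v i * v j) * maxwellian v))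
        + D j * ((1/2) * (∑ k, (v k * v k * v j) * maxwellian v)
            - (3/2) * (v j * maxwellian v))) := by
    intro j
    refine (((intbleP1 j).const_mul (A j)).add
      (integrable_finset_sum _ fun i _ => (intbleP2 i j).const_mul (B i j))).add ?_
    exact (((integrable_finset_sum _ fun k _ => intbleP3 k k j).const_mul (1/2)).sub
      ((intbleP1 j).const_mul (3/2))).const_mul (D j)
  rw [integral_finset_sum _ fun j _ => ible j]
  refine Finset.sum_congr rfl fun j _ => ?_
  have I1 : Integrable (fun v : Fin 3 → ℝ => A j * (v j * maxwellian v)) :=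
    (intbleP1 j).const_mul _
  have I2 : Integrable (fun v : Fin 3 → ℝ => ∑ i, B i j * ((v i * v j) * maxwellian v)) :=
    integrable_finset_sum _ fun i _ => (intbleP2 i j).const_mul _
  have I3a : Integrable (fun v : Fin 3 → ℝ =>
      (1/2) * (∑ k, (v k * v k * v j) * maxwellian v)) :=
    (integrable_finset_sum _ fun k _ => intbleP3 k k j).const_mul _
  have I3b : Integrable (fun v : Fin 3 → ℝ => (3/2) * (v j * maxwellian v)) :=
    (intbleP1 j).const_mul _
  have I3 : Integrable (fun v : Fin 3 → ℝ =>
      D j * ((1/2) * (∑ k, (v k * v k * v j) * maxwellian v)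
        - (3/2) * (v j * maxwellian v))) := (I3a.sub I3b).const_mul _
  have I12 : Integrable (fun v : Fin 3 → ℝ =>
      A j * (v j * maxwellian v) + ∑ i, B i j * ((v i * v j) * maxwellian v)) := I1.add I2
  rw [integral_add I12 I3, integral_add I1 I2, integral_const_mul, intP1,
    integral_finset_sum _ (fun i _ => (intbleP2 i j).const_mul _),
    integral_const_mul, integral_sub I3a I3b, integral_const_mul, integral_const_mul, intP1,
    integral_finset_sum _ (fun k _ => intbleP3 k k j)]
  simp only [integral_const_mul, intP2, intP3]
  simp [Finset.sum_ite_eq', Finset.mem_univ]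

lemma master2 (A D : Fin 3 → ℝ) (B : Fin 3 → Fin 3 → ℝ) (i : Fin 3) :
    ∫ v : Fin 3 → ℝ,
      ((∑ j, v j * (A j + (∑ k, B k j * v k) + ((∑ k, (v k)^2)/2 - 3/2) * D j)) * v i)
        * maxwellian v = A i + D i := by
  have key : ∀ v : Fin 3 → ℝ,
      ((∑ j, v j * (A j + (∑ k, B k j * v k) + ((∑ k, (v k)^2)/2 - 3/2) * D j)) * v i)
        * maxwellian v
      = ∑ j, (A j * ((v j * v i) * maxwellian v) + (∑ k, B k j * ((v k * v j * v i) * maxwellian v))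
          + D j * ((1/2) * (∑ k, ((v k)^2 * (v j * v i)) * maxwellian v)
              - (3/2) * ((v j * v i) * maxwellian v))) := by
    intro v
    rw [Finset.sum_mul, Finset.sum_mul]
    refine Finset.sum_congr rfl fun j _ => ?_
    rw [show (∑ k, B k j * ((v k * v j * v i) * maxwellian v))
          = (∑ k, B k j * v k) * ((v j * v i) * maxwellian v)
        from by rw [Finset.sum_mul]; exact Finset.sum_congr rfl fun k _ => by ring,
      show (∑ k, ((v k)^2 * (v j * v i)) * maxwellian v)
          = (∑ k, (v k)^2) * ((v j * v i) * maxwellian v)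
        from by rw [Finset.sum_mul]; exact Finset.sum_congr rfl fun k _ => by ring]
    ring
  rw [funext key]
  have ible : ∀ j : Fin 3, Integrable (fun v : Fin 3 → ℝ =>
      A j * ((v j * v i) * maxwellian v) + (∑ k, B k j * ((v k * v j * v i) * maxwellian v))
        + D j * ((1/2) * (∑ k, ((v k)^2 * (v j * v i)) * maxwellian v)
            - (3/2) * ((v j * v i) * maxwellian v))) := by
    intro j
    refine (((intbleP2 j i).const_mul (A j)).add
      (integrable_finset_sum _ fun k _ => (intbleP3 k j i).const_mul (B k j))).add ?_
    exact (((integrable_finset_sum _ fun k _ => intbleP4 k j i).const_mul (1/2)).sub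
      ((intbleP2 j i).const_mul (3/2))).const_mul (D j)
  rw [integral_finset_sum _ fun j _ => ible j]
  have perj : ∀ j : Fin 3, (∫ v : Fin 3 → ℝ,
      A j * ((v j * v i) * maxwellian v) + (∑ k, B k j * ((v k * v j * v i) * maxwellian v))
        + D j * ((1/2) * (∑ k, ((v k)^2 * (v j * v i)) * maxwellian v)
            - (3/2) * ((v j * v i) * maxwellian v)))
      = if j = i then A j + D j else 0 := by
    intro j
    have I1 : Integrable (fun v : Fin 3 → ℝ => A j * ((v j * v i) * maxwellian v)) :=
      (intbleP2 j i).const_mul _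
    have I2 : Integrable (fun v : Fin 3 → ℝ =>
        ∑ k, B k j * ((v k * v j * v i) * maxwellian v)) :=
      integrable_finset_sum _ fun k _ => (intbleP3 k j i).const_mul _
    have I3a : Integrable (fun v : Fin 3 → ℝ =>
        (1/2) * (∑ k, ((v k)^2 * (v j * v i)) * maxwellian v)) :=
      (integrable_finset_sum _ fun k _ => intbleP4 k j i).const_mul _
    have I3b : Integrable (fun v : Fin 3 → ℝ => (3/2) * ((v j * v i) * maxwellian v)) :=
      (intbleP2 j i).const_mul _
    have I3 : Integrable (fun v : Fin 3 → ℝ =>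
        D j * ((1/2) * (∑ k, ((v k)^2 * (v j * v i)) * maxwellian v)
          - (3/2) * ((v j * v i) * maxwellian v))) := (I3a.sub I3b).const_mul _
    have I12 : Integrable (fun v : Fin 3 → ℝ =>
        A j * ((v j * v i) * maxwellian v)
          + ∑ k, B k j * ((v k * v j * v i) * maxwellian v)) := I1.add I2
    rw [integral_add I12 I3, integral_add I1 I2, integral_const_mul, intP2,
      integral_finset_sum _ (fun k _ => (intbleP3 k j i).const_mul _),
      integral_const_mul, integral_sub I3a I3b, integral_const_mul, integral_const_mul, intP2,
      integral_finset_sum _ (fun k _ => intbleP4 k j i)]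
    simp only [integral_const_mul, intP3, intP4]
    have hsum : (∑ k : Fin 3, (if j = i then (if k = j then (3:ℝ) else 1) else 0))
        = if j = i then 5 else 0 := by
      rcases eq_or_ne j i with h | h
      · simp only [h, if_true]
        rw [Fin.sum_univ_three]
        fin_cases i <;> norm_num [Fin.ext_iff]
      · simp [h]
    rw [hsum]
    rcases eq_or_ne j i with h | h <;> simp [h] <;> ring
  rw [Finset.sum_congr rfl fun j _ => perj j]
  simp

lemma maxwellian_nonneg (v : Fin 3 → ℝ) : 0 ≤ maxwellian v := by
  rw [maxwellian]; positivity

/-- Incompressibility and Boussinesq relation from the first-order moment equations: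
if `f₁(x,v) = {ρ₁ + v·u₁ + (|v|²/2 - 3/2)θ₁}√μ` and the moments of `v·∇_x f₁` against
`√μ` and `|v|²√μ/2` vanish on the open set `Ω`, then `∇·u₁ = 0` on `Ω`; if additionally
the moments against `v√μ` vanish, then `∇(ρ₁ + θ₁) = 0` on `Ω`. -/
theorem incompressibility_and_boussinesq
    (Ω : Set (Fin 3 → ℝ)) (hΩ : IsOpen Ω)
    (ρ θ : (Fin 3 → ℝ) → ℝ) (u : (Fin 3 → ℝ) → (Fin 3 → ℝ))
    (hρ : ContDiffOn ℝ (⊤ : ℕ∞) ρ Ω) (hθ : ContDiffOn ℝ (⊤ : ℕ∞) θ Ω) (hu : ContDiffOn ℝ (⊤ : ℕ∞) u Ω)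
    (f : (Fin 3 → ℝ) → (Fin 3 → ℝ) → ℝ)
    (hfdef : ∀ x v, f x v =
      (ρ x + (∑ i, u x i * v i) + ((∑ i, (v i) ^ 2) / 2 - 3 / 2) * θ x) *
        Real.sqrt (maxwellian v))
    (h1 : ∀ x ∈ Ω, (∫ v : Fin 3 → ℝ,
      (∑ j, v j * fderiv ℝ (fun y => f y v) x (Pi.single j 1)) *
        Real.sqrt (maxwellian v)) = 0)
    (h2 : ∀ x ∈ Ω, (∫ v : Fin 3 → ℝ,
      (∑ j, v j * fderiv ℝ (fun y => f y v) x (Pi.single j 1)) *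
        ((∑ i, (v i) ^ 2) * Real.sqrt (maxwellian v) / 2)) = 0) :
    (∀ x ∈ Ω, (∑ j, fderiv ℝ (fun y => u y j) x (Pi.single j 1)) = 0) ∧
    ((∀ x ∈ Ω, ∀ i : Fin 3, (∫ v : Fin 3 → ℝ,
        (∑ j, v j * fderiv ℝ (fun y => f y v) x (Pi.single j 1)) *
          (v i * Real.sqrt (maxwellian v))) = 0) →
      ∀ x ∈ Ω, fderiv ℝ (fun y => ρ y + θ y) x = 0) := by
  clear h2
  -- differentiability and the derivative of `f` in `x`
  have hD : ∀ x ∈ Ω, ∀ (v : Fin 3 → ℝ) (w : Fin 3 → ℝ),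
      fderiv ℝ (fun y => f y v) x w =
      (fderiv ℝ ρ x w + (∑ i, fderiv ℝ (fun y => u y i) x w * v i)
        + ((∑ i, (v i)^2)/2 - 3/2) * fderiv ℝ θ x w) * Real.sqrt (maxwellian v) := by
    intro x hx v w
    have hxn : Ω ∈ nhds x := hΩ.mem_nhds hx
    have hρd : DifferentiableAt ℝ ρ x := (hρ.contDiffAt hxn).differentiableAt (by simp)
    have hθd : DifferentiableAt ℝ θ x := (hθ.contDiffAt hxn).differentiableAt (by simp)
    have hud : DifferentiableAt ℝ u x := (hu.contDiffAt hxn).differentiableAt (by simp)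
    have hui : ∀ i, DifferentiableAt ℝ (fun y => u y i) x := differentiableAt_pi.mp hud
    have hse : (fun y => f y v) = fun y =>
        (ρ y + (∑ i, u y i * v i) + ((∑ i, (v i)^2)/2 - 3/2) * θ y) *
          Real.sqrt (maxwellian v) := funext fun y => hfdef y v
    have hsum : HasFDerivAt (fun y => ∑ i, u y i * v i)
        (∑ i, v i • fderiv ℝ (fun y => u y i) x) x := by
      refine HasFDerivAt.fun_sum fun i _ => ?_
      simpa [smul_smul] using (hui i).hasFDerivAt.mul_const (v i)
    have htot : HasFDerivAt (fun y =>
        (ρ y + (∑ i, u y i * v i) + ((∑ i, (v i)^2)/2 - 3/2) * θ y) *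
          Real.sqrt (maxwellian v))
        (Real.sqrt (maxwellian v) •
          ((fderiv ℝ ρ x + ∑ i, v i • fderiv ℝ (fun y => u y i) x)
            + ((∑ i, (v i)^2)/2 - 3/2) • fderiv ℝ θ x)) x := by
      exact ((hρd.hasFDerivAt.add hsum).add
        (hθd.hasFDerivAt.const_mul _)).mul_const _
    rw [hse, htot.fderiv]
    simp only [ContinuousLinearMap.smul_apply, ContinuousLinearMap.add_apply,
      ContinuousLinearMap.coe_sum', Finset.sum_apply, ContinuousLinearMap.smul_apply,
      smul_eq_mul]
    rw [show (∑ i, fderiv ℝ (fun y => u y i) x w * v i)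
        = ∑ i, v i * fderiv ℝ (fun y => u y i) x w from
      Finset.sum_congr rfl fun i _ => mul_comm _ _]
    ring
  constructor
  · intro x hx
    have key := h1 x hx
    have e1 : ∀ v : Fin 3 → ℝ,
        (∑ j, v j * fderiv ℝ (fun y => f y v) x (Pi.single j 1)) * Real.sqrt (maxwellian v)
        = (∑ j, v j * ((fderiv ℝ ρ x (Pi.single j 1))
            + (∑ i, (fderiv ℝ (fun y => u y i) x (Pi.single j 1)) * v i)
            + ((∑ i, (v i)^2)/2 - 3/2) * (fderiv ℝ θ x (Pi.single j 1)))) * maxwellian v := by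
      intro v
      have hs : Real.sqrt (maxwellian v) * Real.sqrt (maxwellian v) = maxwellian v :=
        Real.mul_self_sqrt (maxwellian_nonneg v)
      rw [show (∑ j, v j * fderiv ℝ (fun y => f y v) x (Pi.single j 1))
          = (∑ j, v j * ((fderiv ℝ ρ x (Pi.single j 1))
              + (∑ i, (fderiv ℝ (fun y => u y i) x (Pi.single j 1)) * v i)
              + ((∑ i, (v i)^2)/2 - 3/2) * (fderiv ℝ θ x (Pi.single j 1))))
              * Real.sqrt (maxwellian v) from by
        rw [Finset.sum_mul]
        refine Finset.sum_congr rfl fun j _ => ?_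
        rw [hD x hx v (Pi.single j 1)]; ring]
      rw [mul_assoc, hs]
    rw [funext e1, master1 (fun j => fderiv ℝ ρ x (Pi.single j 1))
      (fun j => fderiv ℝ θ x (Pi.single j 1))
      (fun i j => fderiv ℝ (fun y => u y i) x (Pi.single j 1))] at key
    exact key
  · intro h3 x hx
    have hkey : ∀ i : Fin 3, fderiv ℝ ρ x (Pi.single i 1) + fderiv ℝ θ x (Pi.single i 1) = 0 := by
      intro i
      have key := h3 x hx i
      have e1 : ∀ v : Fin 3 → ℝ,
          (∑ j, v j * fderiv ℝ (fun y => f y v) x (Pi.single j 1)) *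
            (v i * Real.sqrt (maxwellian v))
          = ((∑ j, v j * ((fderiv ℝ ρ x (Pi.single j 1))
              + (∑ k, (fderiv ℝ (fun y => u y k) x (Pi.single j 1)) * v k)
              + ((∑ k, (v k)^2)/2 - 3/2) * (fderiv ℝ θ x (Pi.single j 1)))) * v i)
              * maxwellian v := by
        intro v
        have hs : Real.sqrt (maxwellian v) * Real.sqrt (maxwellian v) = maxwellian v :=
          Real.mul_self_sqrt (maxwellian_nonneg v)
        rw [show (∑ j, v j * fderiv ℝ (fun y => f y v) x (Pi.single j 1))
            = (∑ j, v j * ((fderiv ℝ ρ x (Pi.single j 1))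
                + (∑ k, (fderiv ℝ (fun y => u y k) x (Pi.single j 1)) * v k)
                + ((∑ k, (v k)^2)/2 - 3/2) * (fderiv ℝ θ x (Pi.single j 1))))
                * Real.sqrt (maxwellian v) from by
          rw [Finset.sum_mul]
          refine Finset.sum_congr rfl fun j _ => ?_
          rw [hD x hx v (Pi.single j 1)]; ring]
        calc ((∑ j, v j * ((fderiv ℝ ρ x (Pi.single j 1))
              + (∑ k, (fderiv ℝ (fun y => u y k) x (Pi.single j 1)) * v k)
              + ((∑ k, (v k)^2)/2 - 3/2) * (fderiv ℝ θ x (Pi.single j 1))))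
              * Real.sqrt (maxwellian v)) * (v i * Real.sqrt (maxwellian v))
            = ((∑ j, v j * ((fderiv ℝ ρ x (Pi.single j 1))
              + (∑ k, (fderiv ℝ (fun y => u y k) x (Pi.single j 1)) * v k)
              + ((∑ k, (v k)^2)/2 - 3/2) * (fderiv ℝ θ x (Pi.single j 1)))) * v i)
              * (Real.sqrt (maxwellian v) * Real.sqrt (maxwellian v)) := by ring
          _ = _ := by rw [hs]
      rw [funext e1, master2 (fun j => fderiv ℝ ρ x (Pi.single j 1))
        (fun j => fderiv ℝ θ x (Pi.single j 1))
        (fun k j => fderiv ℝ (fun y => u y k) x (Pi.single j 1)) i] at key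
      exact key
    -- assemble the vanishing of the full derivative
    have hxn : Ω ∈ nhds x := hΩ.mem_nhds hx
    have hρd : DifferentiableAt ℝ ρ x := (hρ.contDiffAt hxn).differentiableAt (by simp)
    have hθd : DifferentiableAt ℝ θ x := (hθ.contDiffAt hxn).differentiableAt (by simp)
    have hsum : fderiv ℝ (fun y => ρ y + θ y) x = fderiv ℝ ρ x + fderiv ℝ θ x :=
      fderiv_add hρd hθd
    rw [hsum]
    ext w
    have hw : w = ∑ j, w j • (Pi.single j 1 : Fin 3 → ℝ) := by
      ext k
      simp [Finset.sum_apply, Pi.single_apply]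
    rw [ContinuousLinearMap.add_apply]
    conv_lhs => rw [hw]
    rw [map_sum, map_sum]
    simp only [_root_.map_smul, smul_eq_mul]
    rw [ContinuousLinearMap.zero_apply, ← Finset.sum_add_distrib]
    exact Finset.sum_eq_zero fun j _ => by linear_combination (w j) * hkey j
end

section
/- Let Q(t) ≥ 0 and z : [0,∞) → [0,∞) absolutely continuous satisfying d/dt[(1+t/k)^k z(t)] ≤ Q(t) + C e^{-λ t} (1+t/k)^k A for all t, where k ≥ 1 is an integer, λ > 0, C, A ≥ 0, and suppose Q(t) ≤ 0 whenever (1+t/k)^k z(t) ≥ D^{-k} for a fixed constant D > 0. Then sup_{t ≥ 0} (1+t/k)^k z(t) ≤ max(z(0), D^{-k}) + C A ∫_0^∞ e^{-λ s}(1+s/k)^k ds, and in particular the integral ∫_0^∞ e^{-λ s}(1+s/k)^k ds is finite. -/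
/-!
Put `F(t) = (1+t/k)^k z(t)` and `ψ(t) = C A e^{-λt}(1+t/k)^k`. The barrier
`M + ∫₀^t ψ`, with `M = max(z(0), D^{-k})`, lies above the threshold `D^{-k}`, so wherever `F`
touches it we have `Q ≤ 0` and hence `F' ≤ ψ`: `F` can never cross the barrier. The barrier is
bounded by `M + C A ∫₀^∞ e^{-λs}(1+s/k)^k ds`, which is finite because the exponential beats
the polynomial.
-/

open MeasureTheory Real Set Filter Asymptotics

lemma isBigO_one_add_div_pow_atTop (c : ℝ) (n : ℕ) :
    (fun x : ℝ => (1 + x / c) ^ n) =O[atTop] fun x => x ^ n := by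
  refine IsBigO.pow ?_ n
  simp only [div_eq_inv_mul]
  exact (isLittleO_const_id_atTop (1 : ℝ)).isBigO.add (isBigO_const_mul_self c⁻¹ id atTop)

lemma integrableOn_Ioi_exp_neg_mul_mul_of_isBigO_pow {f : ℝ → ℝ} {lam a : ℝ} {n : ℕ}
    (hlam : 0 < lam) (hf : ContinuousOn f (Ici a)) (hfO : f =O[atTop] fun x => x ^ n) :
    IntegrableOn (fun x => exp (-lam * x) * f x) (Ioi a) := by
  refine integrable_of_isBigO_exp_neg (half_pos hlam)
    ((continuous_exp.comp (continuous_const_mul _)).continuousOn.mul hf) ?_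
  have hfo := hfO.trans_isLittleO (isLittleO_pow_exp_pos_mul_atTop n (half_pos hlam))
  refine ((isBigO_refl (fun x => exp (-lam * x)) atTop).mul hfo.isBigO).congr_right fun x => ?_
  rw [← exp_add]
  ring_nf

theorem le_add_integral_of_deriv_right_le {f f' ψ : ℝ → ℝ} {a b M : ℝ} (hab : a ≤ b)
    (hf : ContinuousOn f (Icc a b)) (hf' : ∀ x ∈ Ico a b, HasDerivWithinAt f (f' x) (Ici x) x)
    (hψ : Continuous ψ) (hψ0 : ∀ x ∈ Icc a b, 0 ≤ ψ x) (ha : f a ≤ M)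
    (bound : ∀ x ∈ Ico a b, M ≤ f x → f' x ≤ ψ x) :
    f b ≤ M + ∫ x in a..b, ψ x := by
  have hΨ (x : ℝ) : HasDerivAt (fun u => ∫ y in a..u, ψ y) (ψ x) x :=
    intervalIntegral.integral_hasDerivAt_right (hψ.intervalIntegrable a x)
      (hψ.stronglyMeasurableAtFilter _ _) hψ.continuousAt
  have hΨ0 : ∀ x ∈ Icc a b, 0 ≤ ∫ y in a..x, ψ y := fun x hx =>
    intervalIntegral.integral_nonneg hx.1 fun y hy => hψ0 y ⟨hy.1, hy.2.trans hx.2⟩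
  refine le_of_forall_pos_le_add fun δ hδ => ?_
  set ε := δ / (b - a + 1)
  have hε : 0 < ε := div_pos hδ (by linarith)
  -- Tilting the barrier by `ε (x - a)` makes the comparison at contact points strict.
  have hB (x : ℝ) : HasDerivAt (fun u => M + (∫ y in a..u, ψ y) + ε * (u - a)) (ψ x + ε) x := by
    have h := ((hΨ x).const_add M).add (((hasDerivAt_id' x).sub_const a).const_mul ε)
    rwa [mul_one] at h
  have hfb := image_le_of_deriv_right_lt_deriv_boundary hf hf' (by simpa using ha) hB
    (fun x hx hfx => (bound x hx (by
      linarith [hΨ0 x (Ico_subset_Icc_self hx), mul_nonneg hε.le (sub_nonneg.2 hx.1)])).trans_lt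
      (lt_add_of_pos_right _ hε)) (right_mem_Icc.2 hab)
  have hεb : ε * (b - a) ≤ δ :=
    calc ε * (b - a) ≤ ε * (b - a + 1) := by gcongr; linarith
      _ = δ := div_mul_cancel₀ _ (by linarith)
  linarith

lemma intervalIntegral_le_integral_Ioi {ψ : ℝ → ℝ} {a b : ℝ} (hab : a ≤ b)
    (hψ : IntegrableOn ψ (Ioi a)) (hψ0 : ∀ x ∈ Ioi a, 0 ≤ ψ x) :
    ∫ x in a..b, ψ x ≤ ∫ x in Ioi a, ψ x := by
  rw [intervalIntegral.integral_of_le hab]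
  exact setIntegral_mono_set hψ ((ae_restrict_mem measurableSet_Ioi).mono hψ0)
    (Eventually.of_forall Ioc_subset_Ioi_self)

theorem continuity_argument_polynomial_bound_general (k : ℕ)
    (lam C A D : ℝ) (hlam : 0 < lam) (hC : 0 ≤ C) (hA : 0 ≤ A)
    (z F' Q : ℝ → ℝ)
    (hder : ∀ t ∈ Set.Ici (0 : ℝ),
      HasDerivWithinAt (fun s => (1 + s / (k : ℝ)) ^ k * z s) (F' t) (Set.Ici 0) t)
    (hineq : ∀ t ∈ Set.Ici (0 : ℝ),
      F' t ≤ Q t + C * Real.exp (-lam * t) * (1 + t / (k : ℝ)) ^ k * A)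
    (hQneg : ∀ t ∈ Set.Ici (0 : ℝ),
      D ^ (-(k : ℝ)) ≤ (1 + t / (k : ℝ)) ^ k * z t → Q t ≤ 0) :
    (∀ t ∈ Set.Ici (0 : ℝ),
      (1 + t / (k : ℝ)) ^ k * z t ≤
        max (z 0) (D ^ (-(k : ℝ))) +
          C * A * ∫ s in Set.Ioi (0 : ℝ), Real.exp (-lam * s) * (1 + s / (k : ℝ)) ^ k) ∧
    IntegrableOn (fun s => Real.exp (-lam * s) * (1 + s / (k : ℝ)) ^ k)
      (Set.Ioi 0) := by
  set φ : ℝ → ℝ := fun s => exp (-lam * s) * (1 + s / (k : ℝ)) ^ k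
  have hφint : IntegrableOn φ (Ioi 0) := integrableOn_Ioi_exp_neg_mul_mul_of_isBigO_pow hlam
    (by fun_prop) (isBigO_one_add_div_pow_atTop k k)
  have hφ0 (s : ℝ) (hs : 0 ≤ s) : 0 ≤ φ s := by
    have : 0 ≤ 1 + s / (k : ℝ) := by positivity
    positivity
  refine ⟨fun t ht => ?_, hφint⟩
  have hFt := le_add_integral_of_deriv_right_le (ψ := fun s => C * A * φ s)
    (M := max (z 0) (D ^ (-(k : ℝ)))) ht
    (fun s hs => (hder s hs.1).continuousWithinAt.mono Icc_subset_Ici_self)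
    (fun s hs => (hder s hs.1).mono (Ici_subset_Ici.2 hs.1)) (by fun_prop)
    (fun s hs => mul_nonneg (mul_nonneg hC hA) (hφ0 s hs.1)) (by simp)
    (fun s hs hM => by
      linarith [hineq s hs.1, hQneg s hs.1 ((le_max_right _ _).trans hM)])
  rw [intervalIntegral.integral_const_mul] at hFt
  have hI := intervalIntegral_le_integral_Ioi ht hφint fun s hs => hφ0 s (le_of_lt hs)
  linarith [mul_le_mul_of_nonneg_left hI (mul_nonneg hC hA)]

/-- The continuity argument of Section 7: if `F(t) = (1+t/k)^k z(t)` satisfies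
`F' ≤ Q + C e^{-λt}(1+t/k)^k A`, `Q ≥ 0`, and `Q(t) ≤ 0` whenever `F(t) ≥ D^{-k}`,
then `sup_t F(t) ≤ max(z(0), D^{-k}) + CA ∫₀^∞ e^{-λs}(1+s/k)^k ds`, and the
integral `∫₀^∞ e^{-λs}(1+s/k)^k ds` is finite. -/
theorem continuity_argument_polynomial_bound (k : ℕ) (hk : 1 ≤ k)
    (lam C A D : ℝ) (hlam : 0 < lam) (hC : 0 ≤ C) (hA : 0 ≤ A) (hD : 0 < D)
    (z F' Q : ℝ → ℝ)
    (hz : ∀ t ∈ Set.Ici (0 : ℝ), 0 ≤ z t)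
    (hQ0 : ∀ t ∈ Set.Ici (0 : ℝ), 0 ≤ Q t)
    (hder : ∀ t ∈ Set.Ici (0 : ℝ),
      HasDerivWithinAt (fun s => (1 + s / (k : ℝ)) ^ k * z s) (F' t) (Set.Ici 0) t)
    (hineq : ∀ t ∈ Set.Ici (0 : ℝ),
      F' t ≤ Q t + C * Real.exp (-lam * t) * (1 + t / (k : ℝ)) ^ k * A)
    (hQneg : ∀ t ∈ Set.Ici (0 : ℝ),
      D ^ (-(k : ℝ)) ≤ (1 + t / (k : ℝ)) ^ k * z t → Q t ≤ 0) :
    (∀ t ∈ Set.Ici (0 : ℝ),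
      (1 + t / (k : ℝ)) ^ k * z t ≤
        max (z 0) (D ^ (-(k : ℝ))) +
          C * A * ∫ s in Set.Ioi (0 : ℝ), Real.exp (-lam * s) * (1 + s / (k : ℝ)) ^ k) ∧
    IntegrableOn (fun s => Real.exp (-lam * s) * (1 + s / (k : ℝ)) ^ k)
      (Set.Ioi 0) :=
  continuity_argument_polynomial_bound_general k lam C A D hlam hC hA z F' Q hder hineq hQneg
end
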